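/- arXiv:1101.3918 — 2 statements merged into one kernel-verified Lean document; each statement's English description precedes it below -/
import Mathlib

section
/- Let v be a weight function satisfying the doubling condition, let g(x)=v(1-1/x), let A > 1, and define integers b_k by b_0 = 1 and b_{k+1} = min{ l ∈ ℕ : g(2^l) > A g(2^{b_k}) } (this minimum exists since g(x) → ∞). Then the function u(z) = Re ∑_{k=0}^∞ g(2^{b_k}) z^{2^{b_k}} converges on the open unit disk and there exists K > 0 with |u(z)| ≤ K v(|z|) for all z in the disk. -/
/-!
Write `r = 1 - 1/X`, so that `v r = g X`, and pick `i` with `2^i ≤ X < 2^(i+1)`.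
Since `g(2^(b k))` grows at least geometrically with ratio `A`, the terms with `b k ≤ i`
add up to at most `A/(A-1) g(2^i) ≤ A/(A-1) v r`. For `b k = i + 1 + t`, doubling gives
`g(2^(b k)) ≤ D^(t+1) g(2^i)` while `r^(2^(b k)) ≤ exp(-2^(b k)/X) ≤ exp(-2^t)`; the `b k` being
distinct, these terms add up to at most `v r ∑ₜ D^(t+1) exp(-2^t)`.
-/

open Filter Finset Real Topology

section Lacunary

variable {G : ℕ → ℝ} {A D : ℝ} {b : ℕ → ℕ}

theorem sum_range_succ_le_div_mul {a : ℕ → ℝ} (ha : 0 ≤ a 0) (hA : 1 < A)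
    (hgrowth : ∀ k, A * a k ≤ a (k + 1)) (n : ℕ) :
    ∑ k ∈ range (n + 1), a k ≤ A / (A - 1) * a n := by
  have hA1 : 0 < A - 1 := sub_pos.mpr hA
  induction n with
  | zero =>
    rw [sum_range_one, div_mul_eq_mul_div, le_div_iff₀ hA1]
    nlinarith
  | succ n ih =>
    rw [sum_range_succ]
    have : A / (A - 1) * a n + a (n + 1) ≤ A / (A - 1) * a (n + 1) := by
      rw [div_mul_eq_mul_div, div_mul_eq_mul_div, div_add' _ _ _ hA1.ne',
        div_le_div_iff_of_pos_right hA1]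
      nlinarith [hgrowth n]
    linarith

theorem summable_pow_succ_mul_exp_neg_two_pow (hD : 0 < D) :
    Summable fun t : ℕ => D ^ (t + 1) * exp (-2 ^ t) := by
  refine summable_of_ratio_test_tendsto_lt_one zero_lt_one
    (Eventually.of_forall fun t => by positivity) ?_
  have hexp : Tendsto (fun t : ℕ => exp (-2 ^ t)) atTop (𝓝 0) :=
    tendsto_exp_neg_atTop_nhds_zero.comp (tendsto_pow_atTop_atTop_of_one_lt one_lt_two)
  convert (hexp.const_mul D) using 1
  · funext t
    rw [Real.norm_of_nonneg (by positivity), Real.norm_of_nonneg (by positivity),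
      div_eq_iff (by positivity), pow_succ 2 t, mul_two, neg_add, exp_add]
    ring
  · simp

theorem pow_le_exp_neg_mul {r : ℝ} (hr : 0 ≤ r) (n : ℕ) : r ^ n ≤ exp (-((1 - r) * n)) := by
  calc r ^ n ≤ exp (-(1 - r)) ^ n :=
        pow_le_pow_left₀ hr (by linarith [one_sub_le_exp_neg (1 - r)]) n
    _ = exp (-((1 - r) * n)) := by rw [← exp_nat_mul]; ring_nf

theorem strictMono_of_mul_lt (hG0 : ∀ m, 0 ≤ G m) (hG : Monotone G) (hA : 1 ≤ A)
    (hb : ∀ k, A * G (b k) < G (b (k + 1))) : StrictMono b :=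
  strictMono_nat_of_lt_succ fun k => by
    by_contra! h
    nlinarith [hG h, hb k, hG0 (b k)]

theorem apply_add_le_pow_mul (hD : 0 ≤ D) (hdbl : ∀ m, G (m + 1) ≤ D * G m) (m t : ℕ) :
    G (m + t) ≤ D ^ t * G m :=
  le_geom (u := fun t => G (m + t)) hD t fun k _ => hdbl (m + k)

theorem sum_range_mul_pow_two_pow_le (hG0 : ∀ m, 0 ≤ G m) (hG : Monotone G) (hA : 1 < A)
    (hb : ∀ k, A * G (b k) < G (b (k + 1))) {r : ℝ} (hr0 : 0 ≤ r) (hr1 : r ≤ 1) {i n : ℕ}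
    (hn : ∀ k < n, b k ≤ i) :
    ∑ k ∈ range n, G (b k) * r ^ 2 ^ b k ≤ A / (A - 1) * G i := by
  have hc : 0 ≤ A / (A - 1) := div_nonneg (by linarith) (by linarith)
  cases n with
  | zero => simpa using mul_nonneg hc (hG0 i)
  | succ n =>
    calc ∑ k ∈ range (n + 1), G (b k) * r ^ 2 ^ b k
        ≤ ∑ k ∈ range (n + 1), G (b k) :=
          sum_le_sum fun k _ => mul_le_of_le_one_right (hG0 _) (pow_le_one₀ hr0 hr1)
      _ ≤ A / (A - 1) * G (b n) :=
          sum_range_succ_le_div_mul (a := fun k => G (b k)) (hG0 _) hA (fun k => (hb k).le) n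
      _ ≤ A / (A - 1) * G i := mul_le_mul_of_nonneg_left (hG (hn n n.lt_succ_self)) hc

theorem apply_mul_pow_two_pow_le (hG0 : ∀ m, 0 ≤ G m) (hD : 0 ≤ D)
    (hdbl : ∀ m, G (m + 1) ≤ D * G m) {r : ℝ} (hr : 0 ≤ r) {i m : ℕ}
    (hri : 1 ≤ (1 - r) * 2 ^ (i + 1)) (him : i < m) :
    G m * r ^ 2 ^ m ≤ D ^ (m - (i + 1) + 1) * exp (-2 ^ (m - (i + 1))) * G i := by
  obtain ⟨t, rfl⟩ : ∃ t, m = i + 1 + t := ⟨m - (i + 1), by omega⟩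
  rw [Nat.add_sub_cancel_left]
  have hG : G (i + 1 + t) ≤ D ^ (t + 1) * G i := by
    rw [add_assoc, add_comm 1 t]
    exact apply_add_le_pow_mul hD hdbl i (t + 1)
  have hr : r ^ 2 ^ (i + 1 + t) ≤ exp (-2 ^ t) := by
    refine (pow_le_exp_neg_mul hr _).trans (exp_le_exp.mpr (neg_le_neg ?_))
    rw [Nat.cast_pow, Nat.cast_ofNat, pow_add, ← mul_assoc]
    exact le_mul_of_one_le_left (by positivity) hri
  calc G (i + 1 + t) * r ^ 2 ^ (i + 1 + t) ≤ D ^ (t + 1) * G i * exp (-2 ^ t) :=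
        mul_le_mul hG hr (by positivity) (mul_nonneg (by positivity) (hG0 i))
    _ = D ^ (t + 1) * exp (-2 ^ t) * G i := by ring

theorem summable_and_tsum_nat_add_le (hG0 : ∀ m, 0 ≤ G m) (hD : 0 < D)
    (hdbl : ∀ m, G (m + 1) ≤ D * G m) (hb : StrictMono b) {r : ℝ} (hr : 0 ≤ r) {i n : ℕ}
    (hri : 1 ≤ (1 - r) * 2 ^ (i + 1)) (hn : ∀ k, i < b (k + n)) :
    Summable (fun k => G (b (k + n)) * r ^ 2 ^ b (k + n)) ∧
      ∑' k, G (b (k + n)) * r ^ 2 ^ b (k + n) ≤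
        (∑' t : ℕ, D ^ (t + 1) * exp (-2 ^ t)) * G i := by
  set φ : ℕ → ℝ := fun t => D ^ (t + 1) * exp (-2 ^ t) * G i
  have hφ : Summable φ := (summable_pow_succ_mul_exp_neg_two_pow hD).mul_right (G i)
  have hφ0 : ∀ t, 0 ≤ φ t := fun t => mul_nonneg (by positivity) (hG0 i)
  set e : ℕ → ℕ := fun k => b (k + n) - (i + 1)
  have he : Function.Injective e := by
    intro k l hkl
    have := hn k
    have := hn l
    simp only [e] at hkl
    exact add_right_cancel (hb.injective (by omega : b (k + n) = b (l + n)))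
  have hle : ∀ k, G (b (k + n)) * r ^ 2 ^ b (k + n) ≤ φ (e k) := fun k =>
    apply_mul_pow_two_pow_le hG0 hD.le hdbl hr hri (hn k)
  have hsum : Summable fun k => G (b (k + n)) * r ^ 2 ^ b (k + n) :=
    hφ.comp_injective he |>.of_nonneg_of_le (fun k => mul_nonneg (hG0 _) (by positivity)) hle
  refine ⟨hsum, ?_⟩
  calc ∑' k, G (b (k + n)) * r ^ 2 ^ b (k + n) ≤ ∑' t, φ t :=
        hsum.tsum_le_tsum_of_inj e he (fun t _ => hφ0 t) hle hφ
    _ = _ := tsum_mul_right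

noncomputable def lacunaryBound (A D : ℝ) : ℝ :=
  A / (A - 1) + ∑' t : ℕ, D ^ (t + 1) * exp (-2 ^ t)

theorem lacunaryBound_pos (hA : 1 < A) (hD : 0 ≤ D) : 0 < lacunaryBound A D :=
  add_pos_of_pos_of_nonneg (div_pos (by linarith) (by linarith))
    (tsum_nonneg fun t => by positivity)

theorem summable_and_tsum_mul_pow_two_pow_le (hG0 : ∀ m, 0 ≤ G m) (hG : Monotone G)
    (hD : 0 < D) (hdbl : ∀ m, G (m + 1) ≤ D * G m) (hA : 1 < A)
    (hb : ∀ k, A * G (b k) < G (b (k + 1))) {r : ℝ} (hr : 0 ≤ r) {i : ℕ}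
    (hri : 1 ≤ (1 - r) * 2 ^ (i + 1)) :
    Summable (fun k => G (b k) * r ^ 2 ^ b k) ∧
      ∑' k, G (b k) * r ^ 2 ^ b k ≤ lacunaryBound A D * G i := by
  have hbm : StrictMono b := strictMono_of_mul_lt hG0 hG hA.le hb
  have hr1 : r ≤ 1 := by
    have : (0 : ℝ) < 2 ^ (i + 1) := by positivity
    by_contra! h
    nlinarith
  have hex : ∃ k, i < b k := ⟨i + 1, hbm.id_le (i + 1)⟩
  have hhead := sum_range_mul_pow_two_pow_le hG0 hG hA hb hr hr1 (n := Nat.find hex)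
    fun k hk => not_lt.mp (Nat.find_min hex hk)
  obtain ⟨htail, htail_le⟩ := summable_and_tsum_nat_add_le hG0 hD hdbl hbm hr hri
    fun k => (Nat.find_spec hex).trans_le (hbm.monotone (Nat.le_add_left (Nat.find hex) k))
  have hsum : Summable (fun k => G (b k) * r ^ 2 ^ b k) := (summable_nat_add_iff _).mp htail
  refine ⟨hsum, ?_⟩
  rw [← hsum.sum_add_tsum_nat_add (Nat.find hex), lacunaryBound, add_mul]
  exact add_le_add hhead htail_le

end Lacunary

section Weight

variable {v : ℝ → ℝ}

theorem one_sub_one_div_mem_Ico {x : ℝ} (hx : 1 ≤ x) : 1 - 1 / x ∈ Set.Ico (0 : ℝ) 1 :=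
  ⟨by linarith [div_le_one_of_le₀ hx (zero_le_one.trans hx)],
    by linarith [one_div_pos.mpr (zero_lt_one.trans_le hx)]⟩

theorem monotoneOn_comp_one_sub_one_div (hv : MonotoneOn v (Set.Ico 0 1)) :
    MonotoneOn (fun x => v (1 - 1 / x)) (Set.Ici 1) := fun _ hx _ hy hxy =>
  hv (one_sub_one_div_mem_Ico hx) (one_sub_one_div_mem_Ico hy)
    (sub_le_sub_left (one_div_le_one_div_of_le (zero_lt_one.trans_le hx) hxy) 1)

theorem comp_one_sub_one_div_two_mul_le {D : ℝ}
    (hdbl : ∀ d ∈ Set.Ioc (0 : ℝ) (1 / 2), v (1 - d) ≤ D * v (1 - 2 * d)) {x : ℝ} (hx : 1 ≤ x) :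
    v (1 - 1 / (2 * x)) ≤ D * v (1 - 1 / x) := by
  have hx0 : 0 < x := zero_lt_one.trans_le hx
  have hd : 1 / (2 * x) ∈ Set.Ioc (0 : ℝ) (1 / 2) :=
    ⟨by positivity, one_div_le_one_div_of_le two_pos (by linarith)⟩
  have h2 : 2 * (1 / (2 * x)) = 1 / x := by field_simp
  simpa only [h2] using hdbl _ hd

theorem tendsto_one_sub_one_div_atTop : Tendsto (fun x : ℝ => 1 - 1 / x) atTop (𝓝[<] 1) := by
  refine tendsto_nhdsWithin_iff.mpr ⟨?_, ?_⟩
  · simpa using tendsto_inv_atTop_zero.const_sub (1 : ℝ)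
  · filter_upwards [eventually_gt_atTop 0] with x hx
    simpa using hx

variable {g : ℝ → ℝ}

theorem comp_two_pow_nonneg (hg : ∀ x, g x = v (1 - 1 / x))
    (hv : ∀ r ∈ Set.Ico (0 : ℝ) 1, 0 < v r) (m : ℕ) : 0 ≤ g (2 ^ m) :=
  (hg _ ▸ hv _ (one_sub_one_div_mem_Ico (one_le_pow₀ one_le_two))).le

theorem monotone_comp_two_pow (hg : ∀ x, g x = v (1 - 1 / x))
    (hv : MonotoneOn v (Set.Ico 0 1)) : Monotone fun m : ℕ => g (2 ^ m) := fun m l hml => by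
  simpa only [hg] using monotoneOn_comp_one_sub_one_div hv
    (Set.mem_Ici.mpr (one_le_pow₀ one_le_two)) (Set.mem_Ici.mpr (one_le_pow₀ one_le_two))
    (pow_le_pow_right₀ one_le_two hml)

theorem comp_two_pow_succ_le (hg : ∀ x, g x = v (1 - 1 / x)) {D : ℝ}
    (hdbl : ∀ d ∈ Set.Ioc (0 : ℝ) (1 / 2), v (1 - d) ≤ D * v (1 - 2 * d)) (m : ℕ) :
    g (2 ^ (m + 1)) ≤ D * g (2 ^ m) := by
  simpa only [hg, pow_succ'] using comp_one_sub_one_div_two_mul_le hdbl (one_le_pow₀ one_le_two)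

theorem tendsto_comp_two_pow (hg : ∀ x, g x = v (1 - 1 / x)) (hv : Tendsto v (𝓝[<] 1) atTop) :
    Tendsto (fun m : ℕ => g (2 ^ m)) atTop atTop := by
  simpa only [hg, Function.comp_def] using hv.comp (tendsto_one_sub_one_div_atTop.comp
    (tendsto_pow_atTop_atTop_of_one_lt one_lt_two))

theorem summable_and_tsum_le_mul_weight (hg : ∀ x, g x = v (1 - 1 / x))
    (hv_pos : ∀ r ∈ Set.Ico (0 : ℝ) 1, 0 < v r)
    (hv_mono : MonotoneOn v (Set.Ico 0 1)) {D : ℝ} (hD : 0 < D)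
    (hdbl : ∀ d ∈ Set.Ioc (0 : ℝ) (1 / 2), v (1 - d) ≤ D * v (1 - 2 * d))
    {A : ℝ} (hA : 1 < A) {b : ℕ → ℕ} (hb : ∀ k, A * g (2 ^ b k) < g (2 ^ b (k + 1)))
    {r : ℝ} (hr0 : 0 ≤ r) (hr1 : r < 1) :
    Summable (fun k => g (2 ^ b k) * r ^ 2 ^ b k) ∧
      ∑' k, g (2 ^ b k) * r ^ 2 ^ b k ≤ lacunaryBound A D * v r := by
  have hX : 1 ≤ (1 - r)⁻¹ := one_le_inv_iff₀.mpr ⟨sub_pos.mpr hr1, by linarith⟩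
  obtain ⟨i, hi, hi'⟩ := exists_nat_pow_near hX one_lt_two
  have hri : 1 ≤ (1 - r) * 2 ^ (i + 1) :=
    ((inv_lt_iff_one_lt_mul₀' (sub_pos.mpr hr1)).mp hi').le
  have hgi : g (2 ^ i) ≤ v r := by
    simpa only [hg, one_div, inv_inv, sub_sub_cancel] using
      monotoneOn_comp_one_sub_one_div hv_mono (Set.mem_Ici.mpr (one_le_pow₀ one_le_two)) hX hi
  obtain ⟨hsum, hle⟩ := summable_and_tsum_mul_pow_two_pow_le (G := fun m => g (2 ^ m))
    (comp_two_pow_nonneg hg hv_pos) (monotone_comp_two_pow hg hv_mono) hD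
    (comp_two_pow_succ_le hg hdbl) hA hb hr0 hri
  exact ⟨hsum, hle.trans (mul_le_mul_of_nonneg_left hgi (lacunaryBound_pos hA hD.le).le)⟩

end Weight

theorem Filter.Tendsto.lt_apply_sInf_setOf_lt {β : Type*} [Preorder β] [NoMaxOrder β]
    {f : ℕ → β} (hf : Tendsto f atTop atTop) (c : β) : c < f (sInf {l | c < f l}) :=
  Nat.sInf_mem (hf.eventually_gt_atTop c).exists

theorem summable_and_abs_re_tsum_le {a : ℕ → ℝ} (ha : ∀ k, 0 ≤ a k) {n : ℕ → ℕ} {z : ℂ}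
    (h : Summable fun k => a k * ‖z‖ ^ n k) :
    Summable (fun k => (a k : ℂ) * z ^ n k) ∧
      |(∑' k, (a k : ℂ) * z ^ n k).re| ≤ ∑' k, a k * ‖z‖ ^ n k := by
  have hnorm : ∀ k, ‖(a k : ℂ) * z ^ n k‖ = a k * ‖z‖ ^ n k := fun k => by
    rw [norm_mul, norm_pow, Complex.norm_real, Real.norm_of_nonneg (ha k)]
  have h' : Summable fun k => ‖(a k : ℂ) * z ^ n k‖ := by simpa only [hnorm] using h
  refine ⟨h'.of_norm, (Complex.abs_re_le_norm _).trans ?_⟩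
  simpa only [hnorm] using norm_tsum_le_tsum_norm h'

theorem stmt_8_general
    (v : ℝ → ℝ)
    (hv_pos : ∀ r ∈ Set.Ico (0:ℝ) 1, 0 < v r)
    (hv_mono : StrictMonoOn v (Set.Ico (0:ℝ) 1))
    (hv_top : Filter.Tendsto v (nhdsWithin 1 (Set.Iio (1:ℝ))) Filter.atTop)
    (D : ℝ) (hD : 1 < D)
    (hdbl : ∀ d ∈ Set.Ioc (0:ℝ) (1/2:ℝ), v (1 - d) ≤ D * v (1 - 2*d))
    (g : ℝ → ℝ) (hg : ∀ x, g x = v (1 - 1/x))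
    (A : ℝ) (hA : 1 < A)
    (b : ℕ → ℕ)
    (hbrec : ∀ k : ℕ, b (k+1) = sInf {l : ℕ | A * g ((2:ℝ) ^ (b k)) < g ((2:ℝ) ^ l)}) :
    (∀ z ∈ Metric.ball (0:ℂ) 1,
      Summable (fun k : ℕ => (g ((2:ℝ) ^ (b k)) : ℂ) * z ^ (2 ^ (b k)))) ∧
    ∃ K > 0, ∀ z ∈ Metric.ball (0:ℂ) 1,
      |(∑' k : ℕ, (g ((2:ℝ) ^ (b k)) : ℂ) * z ^ (2 ^ (b k))).re|
        ≤ K * v ‖z‖ := by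
  have hb : ∀ k, A * g (2 ^ b k) < g (2 ^ b (k + 1)) := fun k =>
    hbrec k ▸ (tendsto_comp_two_pow hg hv_top).lt_apply_sInf_setOf_lt _
  have hgb : ∀ k, 0 ≤ g (2 ^ b k) := fun k => comp_two_pow_nonneg hg hv_pos (b k)
  have hseries (z : ℂ) (hz : z ∈ Metric.ball (0 : ℂ) 1) :=
    summable_and_tsum_le_mul_weight hg hv_pos hv_mono.monotoneOn (zero_lt_one.trans hD) hdbl
      hA hb (norm_nonneg z) (mem_ball_zero_iff.mp hz)
  exact ⟨fun z hz => (summable_and_abs_re_tsum_le hgb (hseries z hz).1).1,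
    _, lacunaryBound_pos hA (zero_le_one.trans hD.le),
    fun z hz => (summable_and_abs_re_tsum_le hgb (hseries z hz).1).2.trans (hseries z hz).2⟩

theorem stmt_8
    (v : ℝ → ℝ)
    (hv_pos : ∀ r ∈ Set.Ico (0:ℝ) 1, 0 < v r)
    (hv_mono : StrictMonoOn v (Set.Ico (0:ℝ) 1))
    (hv_cont : ContinuousOn v (Set.Ico (0:ℝ) 1))
    (hv_zero : v 0 = 1)
    (hv_top : Filter.Tendsto v (nhdsWithin 1 (Set.Iio (1:ℝ))) Filter.atTop)
    (D : ℝ) (hD : 1 < D)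
    (hdbl : ∀ d ∈ Set.Ioc (0:ℝ) (1/2:ℝ), v (1 - d) ≤ D * v (1 - 2*d))
    (g : ℝ → ℝ) (hg : ∀ x, g x = v (1 - 1/x))
    (A : ℝ) (hA : 1 < A)
    (b : ℕ → ℕ) (hb0 : b 0 = 1)
    (hbrec : ∀ k : ℕ, b (k+1) = sInf {l : ℕ | A * g ((2:ℝ) ^ (b k)) < g ((2:ℝ) ^ l)}) :
    (∀ z ∈ Metric.ball (0:ℂ) 1,
      Summable (fun k : ℕ => (g ((2:ℝ) ^ (b k)) : ℂ) * z ^ (2 ^ (b k)))) ∧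
    ∃ K > 0, ∀ z ∈ Metric.ball (0:ℂ) 1,
      |(∑' k : ℕ, (g ((2:ℝ) ^ (b k)) : ℂ) * z ^ (2 ^ (b k))).re|
        ≤ K * v ‖z‖ :=
  stmt_8_general v hv_pos hv_mono hv_top D hD hdbl g hg A hA b hbrec
end

section
/- Let v be a weight function satisfying the doubling condition with constant D, and let g(x)=v(1-1/x). Then there exist constants C > 0, c > 0 and an integer n_0 ≥ 2, depending only on D, such that for every integer n ≥ n_0, c / g(n) ≤ ∫_{1/2}^{1} r^{n} v(r)^{-2} dv(r) ≤ C / g(n), where the integral is the Riemann–Stieltjes integral with respect to v. -/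
/-!
After the substitution `t = v r` the integral is `∫_{v(1/2)}^∞ w(t)^m t⁻² dt`; put
`G = g m = v (1 - 1/m)`. For `t > G` we have `1 - 1/m ≤ w t < 1`, so the tail over `(G, ∞)` lies
between `(1 - 1/m)^m / G ≥ e⁻² / G` and `1 / G`. For `t ≤ G` write `w t = 1 - x/m` with `x ≥ 1`:
iterating the doubling condition about `log₂ x` times gives `G ≤ D x^(log₂ D) t`, while
`w(t)^m ≤ e^(-x)`, so the integrand is `O(1/G²)` on an interval of length at most `G`.
-/

open Real MeasureTheory Set Filter Topology
open scoped Nat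

theorem rpow_le_factorial_mul_exp {x a : ℝ} (hx : 1 ≤ x) :
    x ^ a ≤ ⌈a⌉₊ ! * exp x := by
  calc x ^ a ≤ x ^ (⌈a⌉₊ : ℝ) := rpow_le_rpow_of_exponent_le hx (Nat.le_ceil a)
    _ = x ^ ⌈a⌉₊ := rpow_natCast x _
    _ ≤ ⌈a⌉₊ ! * exp x := by
      rw [← div_le_iff₀' (by positivity)]
      exact pow_div_factorial_le_exp (x := x) (by linarith) _

theorem exp_neg_two_le_one_sub_one_div_pow {m : ℕ} (hm : 2 ≤ m) :
    exp (-2) ≤ (1 - 1 / m) ^ m := by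
  have hm' : (2 : ℝ) ≤ m := by exact_mod_cast hm
  have hpos : 0 < 1 - 1 / (m : ℝ) := by
    have : 1 / (m : ℝ) ≤ 1 / 2 := by gcongr
    linarith
  -- `log (1 - 1/m) ≥ 1 - (1 - 1/m)⁻¹ = -1/(m-1) ≥ -2/m`
  have hlog : -2 ≤ m * log (1 - 1 / m) := by
    have h := one_sub_inv_le_log_of_pos hpos
    have : (1 - (1 - 1 / (m : ℝ))⁻¹) = -1 / (m - 1) := by
      have : (m : ℝ) - 1 ≠ 0 := by linarith
      field_simp
      ring
    rw [this] at h
    have : -2 ≤ (m : ℝ) * (-1 / (m - 1)) := by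
      rw [mul_div_assoc', le_div_iff₀ (by linarith)]
      linarith
    nlinarith
  calc exp (-2) ≤ exp (m * log (1 - 1 / m)) := exp_le_exp.mpr hlog
    _ = (1 - 1 / m) ^ m := by rw [exp_nat_mul, exp_log hpos]

theorem le_pow_mul_of_doubling {v : ℝ → ℝ} {D : ℝ} (hD : 0 ≤ D)
    (hdbl : ∀ d ∈ Ioc (0 : ℝ) (1 / 2), v (1 - d) ≤ D * v (1 - 2 * d)) :
    ∀ (k : ℕ) {s : ℝ}, 0 < s → 2 ^ k * s ≤ 1 → v (1 - s) ≤ D ^ k * v (1 - 2 ^ k * s)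
  | 0, s, _, _ => by simp
  | k + 1, s, hs, hks => by
    have h2k : (1 : ℝ) ≤ 2 ^ k := one_le_pow₀ (by norm_num)
    rw [pow_succ] at hks ⊢
    calc v (1 - s) ≤ D * v (1 - 2 * s) := hdbl s ⟨hs, by nlinarith⟩
      _ ≤ D * (D ^ k * v (1 - 2 ^ k * (2 * s))) := by
        gcongr
        exact le_pow_mul_of_doubling hD hdbl k (by positivity) (by linarith)
      _ = D ^ k * D * v (1 - 2 ^ k * 2 * s) := by rw [mul_assoc (2 ^ k : ℝ)]; ring

theorem le_rpow_mul_of_doubling {v : ℝ → ℝ} {D : ℝ}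
    (hpos : ∀ r ∈ Ico (0 : ℝ) 1, 0 < v r) (hmono : MonotoneOn v (Ico 0 1)) (hD : 1 ≤ D)
    (hdbl : ∀ d ∈ Ioc (0 : ℝ) (1 / 2), v (1 - d) ≤ D * v (1 - 2 * d))
    {s r : ℝ} (hs : 0 < s) (hsr : s ≤ r) (hr : r ≤ 1 / 2) :
    v (1 - s) ≤ D * (r / s) ^ logb 2 D * v (1 - r) := by
  have hx : 1 ≤ r / s := (one_le_div hs).mpr hsr
  set k := ⌊logb 2 (r / s)⌋₊
  have hk_le : (2 : ℝ) ^ k ≤ r / s := by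
    rw [← rpow_natCast, ← le_logb_iff_rpow_le one_lt_two (by linarith)]
    exact Nat.floor_le (logb_nonneg one_lt_two hx)
  have hk_lt : r / s < 2 ^ (k + 1) := by
    rw [← rpow_natCast, ← logb_lt_iff_lt_rpow one_lt_two (by linarith), Nat.cast_succ]
    exact Nat.lt_floor_add_one _
  rw [le_div_iff₀ hs] at hk_le
  rw [div_lt_iff₀ hs] at hk_lt
  have hDk : D ^ k ≤ (r / s) ^ logb 2 D := by
    calc D ^ k = ((2 : ℝ) ^ logb 2 D) ^ k := by rw [rpow_logb two_pos (by norm_num) (by linarith)]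
      _ = ((2 : ℝ) ^ k) ^ logb 2 D := rpow_pow_comm zero_le_two _ _
      _ ≤ (r / s) ^ logb 2 D := by
        gcongr
        · exact logb_nonneg one_lt_two hD
        · rwa [le_div_iff₀ hs]
  calc v (1 - s) ≤ D ^ (k + 1) * v (1 - 2 ^ (k + 1) * s) :=
        le_pow_mul_of_doubling (by linarith) hdbl (k + 1) hs (by rw [pow_succ]; linarith)
    _ ≤ D ^ (k + 1) * v (1 - r) := by
        gcongr
        have : 0 < (2 : ℝ) ^ (k + 1) * s := by positivity
        exact hmono ⟨by rw [pow_succ]; linarith, by linarith⟩ ⟨by linarith, by linarith⟩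
          (by linarith)
    _ = D * D ^ k * v (1 - r) := by ring
    _ ≤ D * (r / s) ^ logb 2 D * v (1 - r) := by
        gcongr
        exact (hpos _ ⟨by linarith, by linarith⟩).le

theorem rpow_neg_two_eq_one_div_sq {t : ℝ} (ht : 0 ≤ t) : t ^ (-2 : ℝ) = 1 / t ^ 2 := by
  rw [rpow_neg ht, one_div, rpow_two]

theorem integrableOn_Ioi_one_div_sq {c : ℝ} (hc : 0 < c) :
    IntegrableOn (fun t : ℝ ↦ 1 / t ^ 2) (Ioi c) :=
  (integrableOn_Ioi_rpow_of_lt (by norm_num) hc).congr_fun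
    (fun t ht ↦ rpow_neg_two_eq_one_div_sq (hc.trans ht).le) measurableSet_Ioi

theorem integral_Ioi_one_div_sq {c : ℝ} (hc : 0 < c) : ∫ t in Ioi c, 1 / t ^ 2 = 1 / c := by
  rw [← setIntegral_congr_fun measurableSet_Ioi
    (fun t ht ↦ rpow_neg_two_eq_one_div_sq (hc.trans ht).le),
    integral_Ioi_rpow_of_lt (by norm_num) hc]
  norm_num [rpow_neg_one]

theorem one_sub_one_div_mem_Ico_s16 {m : ℕ} (hm : 2 ≤ m) : (1 - 1 / m : ℝ) ∈ Ico (1 / 2) 1 := by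
  have hm' : (2 : ℝ) ≤ m := by exact_mod_cast hm
  have : 1 / (m : ℝ) ≤ 1 / 2 := by gcongr
  have : 0 < 1 / (m : ℝ) := by positivity
  exact ⟨by linarith, by linarith⟩

structure WeightWithInverse (v w : ℝ → ℝ) : Prop where
  pos : ∀ r ∈ Ico (0 : ℝ) 1, 0 < v r
  strictMonoOn : StrictMonoOn v (Ico 0 1)
  continuousOn : ContinuousOn v (Ico 0 1)
  tendsto_atTop : Tendsto v (𝓝[<] 1) atTop
  left_inv : ∀ r ∈ Ico (0 : ℝ) 1, w (v r) = r

namespace WeightWithInverse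

variable {v w : ℝ → ℝ} {a t D : ℝ}

theorem exists_eq (hv : WeightWithInverse v w) (ha : a ∈ Ico (0 : ℝ) 1) (ht : v a ≤ t) :
    ∃ r ∈ Ico a 1, v r = t := by
  obtain ⟨b, hbt, hb⟩ := ((hv.tendsto_atTop.eventually_ge_atTop t).and
    (Ioo_mem_nhdsLT ha.2)).exists
  obtain ⟨r, hr, hrt⟩ := intermediate_value_Icc hb.1.le
    (hv.continuousOn.mono fun y hy ↦ ⟨ha.1.trans hy.1, hy.2.trans_lt hb.2⟩) ⟨ht, hbt⟩
  exact ⟨r, ⟨hr.1, hr.2.trans_lt hb.2⟩, hrt⟩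

theorem inverse_mem_and_apply (hv : WeightWithInverse v w) (ha : a ∈ Ico (0 : ℝ) 1)
    (ht : v a ≤ t) : w t ∈ Ico a 1 ∧ v (w t) = t := by
  obtain ⟨r, hr, rfl⟩ := hv.exists_eq ha ht
  rw [hv.left_inv r ⟨ha.1.trans hr.1, hr.2⟩]
  exact ⟨hr, rfl⟩

theorem inverse_mem (hv : WeightWithInverse v w) (ha : a ∈ Ico (0 : ℝ) 1) (ht : v a ≤ t) :
    w t ∈ Ico (0 : ℝ) 1 :=
  have h := (hv.inverse_mem_and_apply ha ht).1
  ⟨ha.1.trans h.1, h.2⟩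

theorem le_inverse_iff (hv : WeightWithInverse v w) (ha : a ∈ Ico (0 : ℝ) 1) (ht : v a ≤ t)
    {r : ℝ} (hr : r ∈ Ico (0 : ℝ) 1) : r ≤ w t ↔ v r ≤ t := by
  conv_rhs => rw [← (hv.inverse_mem_and_apply ha ht).2]
  exact (hv.strictMonoOn.le_iff_le hr (hv.inverse_mem ha ht)).symm

theorem inverse_le_iff (hv : WeightWithInverse v w) (ha : a ∈ Ico (0 : ℝ) 1) (ht : v a ≤ t)
    {r : ℝ} (hr : r ∈ Ico (0 : ℝ) 1) : w t ≤ r ↔ t ≤ v r := by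
  conv_rhs => rw [← (hv.inverse_mem_and_apply ha ht).2]
  exact (hv.strictMonoOn.le_iff_le (hv.inverse_mem ha ht) hr).symm

theorem monotoneOn_inverse (hv : WeightWithInverse v w) (ha : a ∈ Ico (0 : ℝ) 1) :
    MonotoneOn w (Ici (v a)) := fun _ ht _ hs hts ↦
  (hv.le_inverse_iff ha hs (hv.inverse_mem ha ht)).mpr
    (((hv.inverse_mem_and_apply ha ht).2).trans_le hts)

theorem integrableOn_inverse_pow_div_sq (hv : WeightWithInverse v w) (ha : a ∈ Ico (0 : ℝ) 1)
    (m : ℕ) : IntegrableOn (fun t ↦ w t ^ m / t ^ 2) (Ioi (v a)) := by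
  have hw : AEMeasurable w (volume.restrict (Ioi (v a))) :=
    aemeasurable_restrict_of_monotoneOn measurableSet_Ioi
      ((hv.monotoneOn_inverse ha).mono Ioi_subset_Ici_self)
  refine (integrableOn_Ioi_one_div_sq (hv.pos a ha)).mono'
    ((hw.pow_const m).div (measurable_id.pow_const 2).aemeasurable).aestronglyMeasurable ?_
  filter_upwards [ae_restrict_mem measurableSet_Ioi] with t ht
  have hwt := hv.inverse_mem ha ht.le
  rw [norm_of_nonneg (by have := hwt.1; positivity)]
  gcongr
  exact pow_le_one₀ hwt.1 hwt.2.le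

theorem apply_half_le (hv : WeightWithInverse v w) {m : ℕ} (hm : 2 ≤ m) :
    v (1 / 2) ≤ v (1 - 1 / m) := by
  have h := one_sub_one_div_mem_Ico_s16 hm
  exact hv.strictMonoOn.monotoneOn (by norm_num) ⟨by linarith [h.1], h.2⟩ h.1

theorem exp_neg_two_div_le_setIntegral_inverse_pow_div_sq (hv : WeightWithInverse v w)
    {m : ℕ} (hm : 2 ≤ m) :
    exp (-2) / v (1 - 1 / m) ≤ ∫ t in Ioi (v (1 / 2)), w t ^ m / t ^ 2 := by
  have hhalf : (1 / 2 : ℝ) ∈ Ico 0 1 := by norm_num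
  have hm1 := one_sub_one_div_mem_Ico_s16 hm
  have hm0 : (1 - 1 / m : ℝ) ∈ Ico 0 1 := ⟨by linarith [hm1.1], hm1.2⟩
  set G := v (1 - 1 / m)
  have hG : v (1 / 2) ≤ G := hv.apply_half_le hm
  have hGpos : 0 < G := hv.pos _ hm0
  have hint := hv.integrableOn_inverse_pow_div_sq hhalf m
  calc exp (-2) / G ≤ (1 - 1 / m) ^ m / G := by
        gcongr
        exact exp_neg_two_le_one_sub_one_div_pow hm
    _ = ∫ t in Ioi G, (1 - 1 / m) ^ m * (1 / t ^ 2) := by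
        rw [integral_const_mul, integral_Ioi_one_div_sq hGpos, mul_one_div]
    _ ≤ ∫ t in Ioi G, w t ^ m / t ^ 2 := by
        refine setIntegral_mono_on ((integrableOn_Ioi_one_div_sq hGpos).const_mul _)
          (hint.mono_set (Ioi_subset_Ioi hG)) measurableSet_Ioi fun t ht ↦ ?_
        rw [mul_one_div]
        gcongr
        · exact hm0.1
        · exact (hv.le_inverse_iff hhalf (hG.trans ht.le) hm0).mpr ht.le
    _ ≤ ∫ t in Ioi (v (1 / 2)), w t ^ m / t ^ 2 := by
        refine setIntegral_mono_set hint ?_ (Ioi_subset_Ioi hG).eventuallyLE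
        filter_upwards [ae_restrict_mem measurableSet_Ioi] with t ht
        have := (hv.inverse_mem hhalf ht.le).1
        positivity

theorem inverse_pow_div_sq_le (hv : WeightWithInverse v w) (hD : 1 ≤ D)
    (hdbl : ∀ d ∈ Ioc (0 : ℝ) (1 / 2), v (1 - d) ≤ D * v (1 - 2 * d))
    {m : ℕ} (hm : 2 ≤ m) {t : ℝ} (ht : t ∈ Ioc (v (1 / 2)) (v (1 - 1 / m))) :
    w t ^ m / t ^ 2 ≤ D ^ 2 * ⌈2 * logb 2 D⌉₊ ! / v (1 - 1 / m) ^ 2 := by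
  have hhalf : (1 / 2 : ℝ) ∈ Ico 0 1 := by norm_num
  have hm1 := one_sub_one_div_mem_Ico_s16 hm
  have hm0 : (1 - 1 / m : ℝ) ∈ Ico 0 1 := ⟨by linarith [hm1.1], hm1.2⟩
  have hmpos : (0 : ℝ) < m := by positivity
  obtain ⟨⟨hw_half, hw_one⟩, hvw⟩ := hv.inverse_mem_and_apply hhalf ht.1.le
  have hw_le : w t ≤ 1 - 1 / m := (hv.inverse_le_iff hhalf ht.1.le hm0).mpr ht.2
  have htpos : 0 < t := (hv.pos _ hhalf).trans ht.1
  set x := m * (1 - w t) with hx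
  have hx1 : 1 ≤ x := by
    rw [hx, ← div_le_iff₀' hmpos]
    linarith
  have hgrowth : v (1 - 1 / m) ≤ D * x ^ logb 2 D * t := by
    have h := le_rpow_mul_of_doubling hv.pos hv.strictMonoOn.monotoneOn hD hdbl
      (by positivity : (0 : ℝ) < 1 / m) (by linarith) (by linarith : 1 - w t ≤ 1 / 2)
    have hrs : (1 - w t) / (1 / m) = x := by rw [hx]; field_simp
    rwa [hrs, sub_sub_cancel, hvw] at h
  have hpow : w t ^ m ≤ exp (-x) := by
    have h := one_sub_div_pow_le_exp_neg (n := m) (t := x) (by rw [hx]; nlinarith)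
    rwa [hx, mul_div_cancel_left₀ _ hmpos.ne', sub_sub_cancel] at h
  have hpoly : x ^ (2 * logb 2 D) ≤ ⌈2 * logb 2 D⌉₊ ! * exp x :=
    rpow_le_factorial_mul_exp hx1
  have hGpos : 0 < v (1 - 1 / m) := hv.pos _ hm0
  rw [div_le_div_iff₀ (by positivity) (by positivity)]
  calc w t ^ m * v (1 - 1 / m) ^ 2 ≤ exp (-x) * (D * x ^ logb 2 D * t) ^ 2 := by
        gcongr
    _ = D ^ 2 * x ^ (2 * logb 2 D) * exp (-x) * t ^ 2 := by
        rw [mul_comm 2, rpow_mul (by linarith), rpow_two]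
        ring
    _ ≤ D ^ 2 * (⌈2 * logb 2 D⌉₊ ! * exp x) * exp (-x) * t ^ 2 := by gcongr
    _ = D ^ 2 * ⌈2 * logb 2 D⌉₊ ! * t ^ 2 := by
        rw [exp_neg]
        field_simp

theorem setIntegral_inverse_pow_div_sq_le (hv : WeightWithInverse v w) (hD : 1 ≤ D)
    (hdbl : ∀ d ∈ Ioc (0 : ℝ) (1 / 2), v (1 - d) ≤ D * v (1 - 2 * d))
    {m : ℕ} (hm : 2 ≤ m) :
    ∫ t in Ioi (v (1 / 2)), w t ^ m / t ^ 2 ≤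
      (D ^ 2 * ⌈2 * logb 2 D⌉₊ ! + 1) / v (1 - 1 / m) := by
  have hhalf : (1 / 2 : ℝ) ∈ Ico 0 1 := by norm_num
  have hm1 := one_sub_one_div_mem_Ico_s16 hm
  set K : ℝ := D ^ 2 * (⌈2 * logb 2 D⌉₊ !)
  set G := v (1 - 1 / m)
  have hG : v (1 / 2) ≤ G := hv.apply_half_le hm
  have hGpos : 0 < G := hv.pos _ ⟨by linarith [hm1.1], hm1.2⟩
  have hint := hv.integrableOn_inverse_pow_div_sq hhalf m
  have hhead : ∫ t in Ioc (v (1 / 2)) G, w t ^ m / t ^ 2 ≤ K / G := by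
    have hbound : ∀ t ∈ Ioc (v (1 / 2)) G, ‖w t ^ m / t ^ 2‖ ≤ K / G ^ 2 := by
      intro t ht
      have := (hv.inverse_mem hhalf ht.1.le).1
      rw [norm_of_nonneg (by positivity)]
      exact hv.inverse_pow_div_sq_le hD hdbl hm ht
    calc ∫ t in Ioc (v (1 / 2)) G, w t ^ m / t ^ 2
        ≤ ‖∫ t in Ioc (v (1 / 2)) G, w t ^ m / t ^ 2‖ := le_norm_self _
      _ ≤ K / G ^ 2 * volume.real (Ioc (v (1 / 2)) G) :=
        norm_setIntegral_le_of_norm_le_const measure_Ioc_lt_top hbound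
      _ ≤ K / G ^ 2 * G := by
        rw [Real.volume_real_Ioc_of_le hG]
        gcongr
        linarith [hv.pos _ hhalf]
      _ = K / G := by field_simp
  have htail : ∫ t in Ioi G, w t ^ m / t ^ 2 ≤ 1 / G := by
    rw [← integral_Ioi_one_div_sq hGpos]
    refine setIntegral_mono_on (hint.mono_set (Ioi_subset_Ioi hG))
      (integrableOn_Ioi_one_div_sq hGpos) measurableSet_Ioi fun t ht ↦ ?_
    have hwt := hv.inverse_mem hhalf (hG.trans ht.le)
    gcongr
    exact pow_le_one₀ hwt.1 hwt.2.le
  rw [← Ioc_union_Ioi_eq_Ioi hG, setIntegral_union (Ioc_disjoint_Ioi le_rfl) measurableSet_Ioi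
    (hint.mono_set Ioc_subset_Ioi_self) (hint.mono_set (Ioi_subset_Ioi hG)), add_div]
  exact add_le_add hhead htail

end WeightWithInverse

theorem stmt_16_general
    (v : ℝ → ℝ)
    (hv_pos : ∀ r ∈ Set.Ico (0:ℝ) 1, 0 < v r)
    (hv_mono : StrictMonoOn v (Set.Ico (0:ℝ) 1))
    (hv_cont : ContinuousOn v (Set.Ico (0:ℝ) 1))
    (hv_top : Filter.Tendsto v (nhdsWithin 1 (Set.Iio (1:ℝ))) Filter.atTop)
    (D : ℝ) (hD : 1 < D)
    (hdbl : ∀ d ∈ Set.Ioc (0:ℝ) (1/2:ℝ), v (1 - d) ≤ D * v (1 - 2*d))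
    (g : ℝ → ℝ) (hg : ∀ x, g x = v (1 - 1/x))
    (w : ℝ → ℝ) (hw : ∀ r ∈ Set.Ico (0:ℝ) 1, w (v r) = r) :
    ∃ C > 0, ∃ c > 0, ∃ n₀ : ℕ, 2 ≤ n₀ ∧ ∀ m : ℕ, n₀ ≤ m →
      c / g m ≤ (∫ t in Set.Ioi (v (1/2:ℝ)), w t ^ m / t ^ 2) ∧
      (∫ t in Set.Ioi (v (1/2:ℝ)), w t ^ m / t ^ 2) ≤ C / g m := by
  have hv : WeightWithInverse v w := ⟨hv_pos, hv_mono, hv_cont, hv_top, hw⟩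
  refine ⟨D ^ 2 * (⌈2 * logb 2 D⌉₊ !) + 1, by positivity, exp (-2), exp_pos _, 2, le_rfl,
    fun m hm ↦ ?_⟩
  rw [hg]
  exact ⟨hv.exp_neg_two_div_le_setIntegral_inverse_pow_div_sq hm,
    hv.setIntegral_inverse_pow_div_sq_le hD.le hdbl hm⟩

theorem stmt_16
    (v : ℝ → ℝ)
    (hv_pos : ∀ r ∈ Set.Ico (0:ℝ) 1, 0 < v r)
    (hv_mono : StrictMonoOn v (Set.Ico (0:ℝ) 1))
    (hv_cont : ContinuousOn v (Set.Ico (0:ℝ) 1))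
    (hv_zero : v 0 = 1)
    (hv_top : Filter.Tendsto v (nhdsWithin 1 (Set.Iio (1:ℝ))) Filter.atTop)
    (D : ℝ) (hD : 1 < D)
    (hdbl : ∀ d ∈ Set.Ioc (0:ℝ) (1/2:ℝ), v (1 - d) ≤ D * v (1 - 2*d))
    (g : ℝ → ℝ) (hg : ∀ x, g x = v (1 - 1/x))
    (w : ℝ → ℝ) (hw : ∀ r ∈ Set.Ico (0:ℝ) 1, w (v r) = r) :
    ∃ C > 0, ∃ c > 0, ∃ n₀ : ℕ, 2 ≤ n₀ ∧ ∀ m : ℕ, n₀ ≤ m →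
      c / g m ≤ (∫ t in Set.Ioi (v (1/2:ℝ)), w t ^ m / t ^ 2) ∧
      (∫ t in Set.Ioi (v (1/2:ℝ)), w t ^ m / t ^ 2) ≤ C / g m :=
  stmt_16_general v hv_pos hv_mono hv_cont hv_top D hD hdbl g hg w hw
end
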